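/- Let K, E ≥ 2 be integers and L ∈ [0,1]^{K×E} a loss matrix with rows ℓ_a. Let K_loc be the maximal size of a subset A ⊆ [K] with ⋂_{a∈A} C_a ≠ ∅. Then there exists ε > 0 such that for every u ∈ 𝒫_{E−1}, the set M_u = {a ∈ [K] : ⟨ℓ_a, u⟩ − min_{b∈[K]} ⟨ℓ_b, u⟩ < ε} consists of actions that are pairwise weak neighbors and satisfies |M_u| ≤ K_loc. -/

import Mathlib

/-! The simplex is compact and the suboptimality gaps `⟨ℓ_a, u⟩ - min_b ⟨ℓ_b, u⟩` are continuous,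
so if the cells of a set `S` of actions have no common point, some action of `S` has gap bounded
below by a positive `δ_S` uniformly on the simplex. Any `ε` below all `δ_S` works: the actions with
gap `< ε` then share a point of their cells, so they are pairwise weak neighbours and form a
point-local game. -/

open scoped BigOperators

/-- The probability simplex in `ℝ^E`. -/
def probSimplex (E : ℕ) : Set (Fin E → ℝ) :=
  {u | (∀ i, 0 ≤ u i ∧ u i ≤ 1) ∧ ∑ i, u i = 1}

/-- The cell of action `a`: the set of distributions on which `a` is optimal. -/
def cell {K E : ℕ} (L : Fin K → Fin E → ℝ) (a : Fin K) : Set (Fin E → ℝ) :=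
  {u | u ∈ probSimplex E ∧ ∀ b, ∑ i, L a i * u i ≤ ∑ i, L b i * u i}

/-- `min_{c ∈ [K]} ⟨ℓ_c, u⟩`. -/
noncomputable def minLoss {K E : ℕ} (L : Fin K → Fin E → ℝ) (u : Fin E → ℝ) : ℝ :=
  ⨅ c : Fin K, ∑ i, L c i * u i

open Filter Topology

theorem IsCompact.exists_pos_forall_exists_le {α ι : Type*} [TopologicalSpace α] {X : Set α}
    (hX : IsCompact X) {S : Finset ι} {f : ι → α → ℝ} (hf : ∀ a ∈ S, ContinuousOn (f a) X)
    (hpos : ∀ x ∈ X, ∃ a ∈ S, 0 < f a x) :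
    ∃ δ > 0, ∀ x ∈ X, ∃ a ∈ S, δ ≤ f a x := by
  rcases S.eq_empty_or_nonempty with rfl | hS
  · exact ⟨1, one_pos, fun x hx => by simpa using hpos x hx⟩
  obtain ⟨δ, hδ, hle⟩ := hX.exists_forall_le' (ContinuousOn.finset_sup'_apply hS hf)
    fun x hx => (Finset.lt_sup'_iff hS).2 (hpos x hx)
  exact ⟨δ, hδ, fun x hx => (Finset.le_sup'_iff hS).1 (hle x hx)⟩

theorem probSimplex_eq_stdSimplex (E : ℕ) : probSimplex E = stdSimplex ℝ (Fin E) := by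
  ext u
  refine ⟨fun hu => ⟨fun i => (hu.1 i).1, hu.2⟩, fun hu => ⟨fun i => ⟨hu.1 i, ?_⟩, hu.2⟩⟩
  calc u i ≤ ∑ j, u j := Finset.single_le_sum (fun j _ => hu.1 j) (Finset.mem_univ i)
    _ = 1 := hu.2

theorem isCompact_probSimplex (E : ℕ) : IsCompact (probSimplex E) := by
  rw [probSimplex_eq_stdSimplex]
  exact isCompact_stdSimplex ℝ (Fin E)

section Gap

variable {K E : ℕ} (L : Fin K → Fin E → ℝ)

theorem minLoss_le (u : Fin E → ℝ) (a : Fin K) : minLoss L u ≤ ∑ i, L a i * u i :=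
  ciInf_le (Set.finite_range _).bddBelow a

theorem continuous_minLoss : Continuous (minLoss L) := by
  show Continuous fun u : Fin E → ℝ => ⨅ c : Fin K, ∑ i, L c i * u i
  cases isEmpty_or_nonempty (Fin K)
  · simp only [Real.iInf_of_isEmpty]
    exact continuous_const
  · simp only [← Finset.inf'_univ_eq_ciInf]
    exact Continuous.finset_inf'_apply _ fun c _ => by fun_prop

noncomputable def gap (u : Fin E → ℝ) (a : Fin K) : ℝ :=
  ∑ i, L a i * u i - minLoss L u

theorem gap_nonneg (u : Fin E → ℝ) (a : Fin K) : 0 ≤ gap L u a :=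
  sub_nonneg.2 (minLoss_le L u a)

theorem continuous_gap (a : Fin K) : Continuous fun u => gap L u a :=
  (by fun_prop : Continuous fun u : Fin E → ℝ => ∑ i, L a i * u i).sub (continuous_minLoss L)

theorem mem_cell_iff_gap_eq_zero {u : Fin E → ℝ} (hu : u ∈ probSimplex E) (a : Fin K) :
    u ∈ cell L a ↔ gap L u a = 0 := by
  have : Nonempty (Fin K) := ⟨a⟩
  refine ⟨fun h => le_antisymm ?_ (gap_nonneg L u a), fun h => ⟨hu, fun b => ?_⟩⟩
  · exact sub_nonpos.2 (le_ciInf h.2)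
  · linarith [sub_eq_zero.1 h, minLoss_le L u b]

theorem exists_pos_forall_exists_le_gap {S : Finset (Fin K)}
    (hS : ¬ ∃ w, ∀ a ∈ S, w ∈ cell L a) :
    ∃ δ > 0, ∀ u ∈ probSimplex E, ∃ a ∈ S, δ ≤ gap L u a := by
  refine (isCompact_probSimplex E).exists_pos_forall_exists_le
    (fun a _ => (continuous_gap L a).continuousOn) fun u hu => ?_
  by_contra! h
  exact hS ⟨u, fun a ha => (mem_cell_iff_gap_eq_zero L hu a).2
    (le_antisymm (h a ha) (gap_nonneg L u a))⟩

theorem eventually_exists_mem_cell_of_gap_lt :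
    ∀ᶠ ε in 𝓝[>] (0 : ℝ), ∀ u ∈ probSimplex E, ∃ w, ∀ a, gap L u a < ε → w ∈ cell L a := by
  have hsubset : ∀ S : Finset (Fin K), ∀ᶠ ε in 𝓝[>] (0 : ℝ), ∀ u ∈ probSimplex E,
      (∀ a ∈ S, gap L u a < ε) → ∃ w, ∀ a ∈ S, w ∈ cell L a := by
    intro S
    by_cases hS : ∃ w, ∀ a ∈ S, w ∈ cell L a
    · exact Eventually.of_forall fun _ _ _ _ => hS
    obtain ⟨δ, hδ, hle⟩ := exists_pos_forall_exists_le_gap L hS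
    filter_upwards [nhdsWithin_le_nhds (gt_mem_nhds hδ)] with ε hε u hu hlt
    obtain ⟨a, ha, hδa⟩ := hle u hu
    exact absurd (hlt a ha) (by linarith)
  filter_upwards [eventually_all.2 hsubset] with ε hε u hu
  simpa using hε {a | gap L u a < ε}.toFinset u hu (by simp)

end Gap

theorem stmt5_general {K E : ℕ}
    (L : Fin K → Fin E → ℝ)
    (Kloc : ℕ)
    (hKloc2 : ∀ A : Finset (Fin K), (∃ u, ∀ a ∈ A, u ∈ cell L a) → A.card ≤ Kloc) :
    ∃ ε > (0 : ℝ), ∀ u ∈ probSimplex E,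
      (∀ a b : Fin K,
        (∑ i, L a i * u i) - minLoss L u < ε →
        (∑ i, L b i * u i) - minLoss L u < ε →
        (cell L a ∩ cell L b).Nonempty) ∧
      {a : Fin K | (∑ i, L a i * u i) - minLoss L u < ε}.ncard ≤ Kloc := by
  obtain ⟨ε, hε, hpos⟩ :=
    ((eventually_exists_mem_cell_of_gap_lt L).and self_mem_nhdsWithin).exists
  refine ⟨ε, hpos, fun u hu => ?_⟩
  obtain ⟨w, hw⟩ := hε u hu
  refine ⟨fun a b ha hb => ⟨w, hw a ha, hw b hb⟩, ?_⟩
  rw [Set.ncard_eq_toFinset_card']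
  exact hKloc2 _ ⟨w, fun a ha => hw a (by simpa [gap] using ha)⟩

theorem stmt5 {K E : ℕ} (hK : 2 ≤ K) (hE : 2 ≤ E)
    (L : Fin K → Fin E → ℝ) (hL : ∀ a i, L a i ∈ Set.Icc (0 : ℝ) 1)
    (Kloc : ℕ)
    (hKloc1 : ∃ A : Finset (Fin K), (∃ u, ∀ a ∈ A, u ∈ cell L a) ∧ A.card = Kloc)
    (hKloc2 : ∀ A : Finset (Fin K), (∃ u, ∀ a ∈ A, u ∈ cell L a) → A.card ≤ Kloc) :
    ∃ ε > (0 : ℝ), ∀ u ∈ probSimplex E,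
      (∀ a b : Fin K,
        (∑ i, L a i * u i) - minLoss L u < ε →
        (∑ i, L b i * u i) - minLoss L u < ε →
        (cell L a ∩ cell L b).Nonempty) ∧
      {a : Fin K | (∑ i, L a i * u i) - minLoss L u < ε}.ncard ≤ Kloc :=
  stmt5_general L Kloc hKloc2
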